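/- arXiv:1403.2778 — 3 statements merged into one kernel-verified Lean document; each statement's English description precedes it below -/
import Mathlib

section
/- Let γ > 0, Λ ≥ 1, and 0 < d with (d+γ)² − d(d+2γ)Λ² ≥ 0. In the plane, consider a point x at distance d above the point y = 0, with a ball B_γ(z) of radius γ tangent to the horizontal axis at y from below (center z at depth γ below y). Then any ray emanating from x whose angle θ with the downward vertical satisfies cos θ ≥ 1/Λ intersects the closed ball B̄_γ(z), and the distance from x to the first intersection point is at most d' = d(d+2γ)Λ / ((d+γ) + √((d+γ)² − d(d+2γ)Λ²)). -/
/-!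
With `D = d + γ` the distance from `x` to the centre `z` and `θ` the angle between the ray `w`
and `z - x`, `‖x + s • w - z‖² = s² - 2 s D cos θ + D²`. For `cos θ ≥ 1/Λ` this is at most
`s² - 2 s D / Λ + D²`, and `d'` is the smaller root of `s² - 2 s D / Λ + d (d + 2γ) = 0`
(after rationalising the numerator), so `x + d' • w` lies in `B̄_γ(z)`.
-/

lemma div_add_sqrt_eq_sub_sqrt_div {D P Λ : ℝ} (hD : 0 < D) (hΛ : Λ ≠ 0)
    (hdisc : 0 ≤ D ^ 2 - P * Λ ^ 2) :
    P * Λ / (D + √(D ^ 2 - P * Λ ^ 2)) = (D - √(D ^ 2 - P * Λ ^ 2)) / Λ := by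
  have hpos : 0 < D + √(D ^ 2 - P * Λ ^ 2) := by positivity
  rw [div_eq_div_iff hpos.ne' hΛ]
  nlinarith [Real.sq_sqrt hdisc]

lemma norm_smul_sub_smul_sq {E : Type*} [NormedAddCommGroup E] [InnerProductSpace ℝ E]
    {u w : E} (hu : ‖u‖ = 1) (hw : ‖w‖ = 1) (s D : ℝ) :
    ‖s • w - D • u‖ ^ 2 = s ^ 2 - 2 * s * D * inner ℝ w u + D ^ 2 := by
  rw [norm_sub_sq_real, real_inner_smul_left, real_inner_smul_right, norm_smul, norm_smul, hu, hw,
    mul_one, mul_one, Real.norm_eq_abs, Real.norm_eq_abs, sq_abs, sq_abs]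
  ring

theorem add_smul_mem_closedBall_of_inner_ge {E : Type*} [NormedAddCommGroup E]
    [InnerProductSpace ℝ E] {γ Λ d : ℝ} (hγ : 0 < γ) (hΛ : 0 < Λ) (hd : 0 ≤ d)
    (hdisc : 0 ≤ (d + γ) ^ 2 - d * (d + 2 * γ) * Λ ^ 2)
    {x u w : E} (hu : ‖u‖ = 1) (hw : ‖w‖ = 1) (hangle : 1 / Λ ≤ inner ℝ w u) :
    x + (d * (d + 2 * γ) * Λ / ((d + γ) + √((d + γ) ^ 2 - d * (d + 2 * γ) * Λ ^ 2))) • w ∈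
      Metric.closedBall (x + (d + γ) • u) γ := by
  have hDpos : 0 < d + γ := by linarith
  set D := d + γ with hD
  set r := √(D ^ 2 - d * (d + 2 * γ) * Λ ^ 2)
  set s := d * (d + 2 * γ) * Λ / (D + r)
  have hs0 : 0 ≤ s := by positivity
  have hs : s = (D - r) / Λ := div_add_sqrt_eq_sub_sqrt_div hDpos hΛ.ne' hdisc
  have hroot : s ^ 2 - 2 * s * D * (1 / Λ) + D ^ 2 = γ ^ 2 := by
    have hr2 : r ^ 2 = D ^ 2 - d * (d + 2 * γ) * Λ ^ 2 := Real.sq_sqrt hdisc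
    rw [hs]
    field_simp
    linear_combination hr2 + Λ ^ 2 * (D + d + γ) * hD
  have hsq : ‖s • w - D • u‖ ^ 2 ≤ γ ^ 2 := by
    rw [norm_smul_sub_smul_sq hu hw, ← hroot]
    have : 0 ≤ s * D := by positivity
    nlinarith [mul_le_mul_of_nonneg_left hangle this]
  rw [Metric.mem_closedBall, dist_eq_norm, add_sub_add_left_eq_sub]
  exact (pow_le_pow_iff_left₀ (norm_nonneg _) hγ.le two_ne_zero).mp hsq

/-- Planar geometry: a ray from `x = (0,d)` whose angle `θ` with the downward vertical
satisfies `cos θ ≥ 1/Λ` hits the closed ball of radius `γ` centered at `(0,-γ)`, at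
distance at most `d' = d(d+2γ)Λ/((d+γ)+√((d+γ)²-d(d+2γ)Λ²))` from `x`. -/
theorem stmt7 (γ Lam d : ℝ) (hγ : 0 < γ) (hLam : 1 ≤ Lam) (hd : 0 < d)
    (hcond : (d + γ) ^ 2 - d * (d + 2 * γ) * Lam ^ 2 ≥ 0)
    (w : EuclideanSpace ℝ (Fin 2)) (hw : ‖w‖ = 1)
    (hangle : (inner ℝ w ((WithLp.equiv 2 (Fin 2 → ℝ)).symm ![0, -1]) : ℝ) ≥ 1 / Lam) :
    ∃ s : ℝ, 0 ≤ s ∧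
      s ≤ d * (d + 2 * γ) * Lam /
          ((d + γ) + Real.sqrt ((d + γ) ^ 2 - d * (d + 2 * γ) * Lam ^ 2)) ∧
      ((WithLp.equiv 2 (Fin 2 → ℝ)).symm ![0, d] + s • w) ∈
        Metric.closedBall ((WithLp.equiv 2 (Fin 2 → ℝ)).symm ![0, -γ]) γ := by
  have hLam0 : 0 < Lam := zero_lt_one.trans_le hLam
  set u := (WithLp.equiv 2 (Fin 2 → ℝ)).symm ![0, -1]
  have hu : ‖u‖ = 1 := by
    simp [u, EuclideanSpace.norm_eq, Fin.sum_univ_two]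
  have hcentre : (WithLp.equiv 2 (Fin 2 → ℝ)).symm ![0, -γ] =
      (WithLp.equiv 2 (Fin 2 → ℝ)).symm ![0, d] + (d + γ) • u := by
    ext i
    fin_cases i <;> simp [u]
  refine ⟨_, by positivity, le_rfl, ?_⟩
  rw [hcentre]
  exact add_smul_mem_closedBall_of_inner_ge hγ hLam0 hd.le hcond hu hw hangle
end

section
/- Let α₁, …, α_{n−1} ∈ ℝ with Σᵢ αᵢ² ≤ β, and let B be the arrow matrix as above. If c > 1 + 2β, then all eigenvalues of B are at least min(c, (c − β)/(1+c)) > 0; in particular B is positive definite. -/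
/-!
For `μ` below the bound, `B - μ • 1` is again an arrow matrix, with corner `1 - μ`, diagonal
`c - μ` and arm `a = (α₁, …, α_{n+1})`. An arrow matrix with corner `d`, diagonal `c > 0` and arm
`a` is positive definite as soon as `‖a‖² < d c` (its Schur complement `d - ‖a‖²/c` is positive),
which for a vector `x = (x₀, y)` is read off the identity
`c · xᵀAx = ‖c y + x₀ a‖² + (d c - ‖a‖²) x₀²`.
If `μ < (c - β)/(1 + c)` then `(1 - μ)(c - μ) > β ≥ ‖a‖²`, so `B - μ • 1` is positive definite,
in particular nonsingular, and `μ` is not an eigenvalue.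
-/

open Matrix

section Arrow

variable {n : ℕ}

/-- The entry `α 0` is not used: the corner entry is `d`. -/
def arrowMatrix (d c : ℝ) (α : Fin (n + 1) → ℝ) : Matrix (Fin (n + 1)) (Fin (n + 1)) ℝ :=
  Matrix.of fun i j =>
    if i = 0 ∧ j = 0 then d
    else if i = 0 then α j
    else if j = 0 then α i
    else if i = j then c else 0

theorem arrowMatrix_sub_smul_one (d c μ : ℝ) (α : Fin (n + 1) → ℝ) :
    arrowMatrix d c α - μ • 1 = arrowMatrix (d - μ) (c - μ) α := by
  ext i j
  cases i using Fin.cases <;> cases j using Fin.cases <;>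
    simp [arrowMatrix, Matrix.one_apply, Fin.succ_ne_zero, (Fin.succ_ne_zero _).symm]
  split_ifs <;> ring

theorem arrowMatrix_isHermitian (d c : ℝ) (α : Fin (n + 1) → ℝ) :
    (arrowMatrix d c α).IsHermitian := by
  ext i j
  cases i using Fin.cases <;> cases j using Fin.cases <;>
    simp [arrowMatrix, Fin.succ_ne_zero, eq_comm]

theorem arrowMatrix_mulVec_zero (d c : ℝ) (α x : Fin (n + 1) → ℝ) :
    (arrowMatrix d c α *ᵥ x) 0 = d * x 0 + ∑ j : Fin n, α j.succ * x j.succ := by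
  simp [arrowMatrix, mulVec, dotProduct, Fin.sum_univ_succ]

theorem arrowMatrix_mulVec_succ (d c : ℝ) (α x : Fin (n + 1) → ℝ) (i : Fin n) :
    (arrowMatrix d c α *ᵥ x) i.succ = α i.succ * x 0 + c * x i.succ := by
  simp [arrowMatrix, mulVec, dotProduct, Fin.sum_univ_succ, ite_mul]

theorem arrowMatrix_quadForm (d c : ℝ) (α x : Fin (n + 1) → ℝ) :
    c * (x ⬝ᵥ (arrowMatrix d c α *ᵥ x)) =
      ∑ j : Fin n, (c * x j.succ + x 0 * α j.succ) ^ 2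
        + (d * c - ∑ j : Fin n, α j.succ ^ 2) * x 0 ^ 2 := by
  simp only [dotProduct, Fin.sum_univ_succ (f := fun i => x i * _), arrowMatrix_mulVec_zero,
    arrowMatrix_mulVec_succ, Finset.mul_sum, mul_add, Finset.sum_add_distrib]
  have hsq : ∀ j : Fin n, (c * x j.succ + x 0 * α j.succ) ^ 2 =
      c * (x 0 * (α j.succ * x j.succ)) + c * (x j.succ * (α j.succ * x 0))
        + c * (x j.succ * (c * x j.succ)) + α j.succ ^ 2 * x 0 ^ 2 := fun j => by ring
  simp only [hsq, Finset.sum_add_distrib, sub_mul, Finset.sum_mul]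
  ring

theorem arrowMatrix_posDef {d c : ℝ} {α : Fin (n + 1) → ℝ} (hc : 0 < c)
    (h : ∑ j : Fin n, α j.succ ^ 2 < d * c) : (arrowMatrix d c α).PosDef := by
  refine (posDef_iff_dotProduct_mulVec).2 ⟨arrowMatrix_isHermitian d c α, fun x hx => ?_⟩
  rw [star_trivial]
  refine pos_of_mul_pos_right (a := c) ?_ hc.le
  rw [arrowMatrix_quadForm]
  rcases eq_or_ne (x 0) 0 with hx0 | hx0
  · obtain ⟨j, hj⟩ : ∃ j : Fin n, x j.succ ≠ 0 := by
      by_contra! hzero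
      exact hx (funext fun i => Fin.cases hx0 hzero i)
    simp only [hx0, zero_mul, add_zero, ne_eq, OfNat.ofNat_ne_zero, not_false_eq_true,
      zero_pow, mul_zero]
    exact Finset.sum_pos' (fun j _ => sq_nonneg _)
      ⟨j, Finset.mem_univ j, sq_pos_of_ne_zero (mul_ne_zero hc.ne' hj)⟩
  · exact add_pos_of_nonneg_of_pos (by positivity) (mul_pos (sub_pos.2 h) (sq_pos_of_ne_zero hx0))

end Arrow

theorem lt_one_sub_mul_sub_of_lt_div {β c μ : ℝ} (hc : 0 < 1 + c)
    (hμ : μ < (c - β) / (1 + c)) : β < (1 - μ) * (c - μ) := by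
  rw [lt_div_iff₀ hc] at hμ
  nlinarith [sq_nonneg μ]

theorem stmt9_general (n : ℕ) (α : Fin (n + 2) → ℝ)
    (β : ℝ) (hβ : ∑ i, (α i) ^ 2 ≤ β) (c : ℝ) (hc : 1 + 2 * β < c)
    (B : Matrix (Fin (n + 2)) (Fin (n + 2)) ℝ)
    (hB : B = Matrix.of fun i j =>
      if i = 0 ∧ j = 0 then 1
      else if i = 0 then α j
      else if j = 0 then α i
      else if i = j then c else 0) :
    (0 < min c ((c - β) / (1 + c))) ∧
    (∀ lam : ℝ, (B - lam • (1 : Matrix (Fin (n + 2)) (Fin (n + 2)) ℝ)).det = 0 →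
      min c ((c - β) / (1 + c)) ≤ lam) ∧
    B.PosDef := by
  have hB : B = arrowMatrix 1 c α := hB
  have hβ0 : 0 ≤ β := (Finset.sum_nonneg fun i _ => sq_nonneg (α i)).trans hβ
  have hα : ∑ j : Fin (n + 1), α j.succ ^ 2 ≤ β := by
    rw [Fin.sum_univ_succ] at hβ
    linarith [sq_nonneg (α 0)]
  have hgap : ∀ μ < min c ((c - β) / (1 + c)), (B - μ • 1).PosDef := by
    intro μ hμ
    rw [hB, arrowMatrix_sub_smul_one]
    refine arrowMatrix_posDef (sub_pos.2 (hμ.trans_le (min_le_left _ _))) ?_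
    exact hα.trans_lt <| lt_one_sub_mul_sub_of_lt_div (by linarith) (hμ.trans_le (min_le_right _ _))
  have hpos : 0 < min c ((c - β) / (1 + c)) :=
    lt_min (by linarith) (div_pos (by linarith) (by linarith))
  refine ⟨hpos, fun μ hdet => not_lt.1 fun hμ => (hgap μ hμ).det_pos.ne' hdet, ?_⟩
  simpa using hgap 0 hpos

/-- If `Σαᵢ² ≤ β` and `c > 1 + 2β`, then every eigenvalue of the arrow matrix `B` is at
least `min(c, (c-β)/(1+c)) > 0`; in particular `B` is positive definite. -/
theorem stmt9 (n : ℕ) (α : Fin (n + 2) → ℝ) (hα0 : α 0 = 0)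
    (β : ℝ) (hβ : ∑ i, (α i) ^ 2 ≤ β) (c : ℝ) (hc : 1 + 2 * β < c)
    (B : Matrix (Fin (n + 2)) (Fin (n + 2)) ℝ)
    (hB : B = Matrix.of fun i j =>
      if i = 0 ∧ j = 0 then 1
      else if i = 0 then α j
      else if j = 0 then α i
      else if i = j then c else 0) :
    (0 < min c ((c - β) / (1 + c))) ∧
    (∀ lam : ℝ, (B - lam • (1 : Matrix (Fin (n + 2)) (Fin (n + 2)) ℝ)).det = 0 →
      min c ((c - β) / (1 + c)) ≤ lam) ∧
    B.PosDef :=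
  stmt9_general n α β hβ c hc B hB
end

section
/- Let γ > r > 0, and in ℝⁿ let B_γ(x′) be a ball of radius γ, x_r a point on its boundary sphere, and ν the outward unit normal at x_r. Then the set B_{√(γr)}(x_r) ∩ {x : (x − x_r)·ν ≤ −3r} is contained in B_{γ−2r}(x′), provided r < γ/4. -/
/-!
Expanding `‖x - x'‖² = ‖x - x_r‖² + 2⟪x - x_r, x_r - x'⟫ + γ²` and using the two constraints
gives `‖x - x'‖² ≤ γr - 6γr + γ² = γ² - 5γr`, which is at most `(γ - 2r)²`
since the difference is `r(γ + 4r) ≥ 0`.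
-/

open Metric RealInnerProductSpace

section

variable {E : Type*} [NormedAddCommGroup E] [InnerProductSpace ℝ E]

lemma norm_sub_sq_le_of_inner_le {x c p : E} {γ r : ℝ} (hp : ‖p - c‖ = γ)
    (hx : ‖x - p‖ ^ 2 ≤ γ * r) (hdepth : ⟪x - p, p - c⟫ ≤ -3 * r * γ) :
    ‖x - c‖ ^ 2 ≤ γ ^ 2 - 5 * γ * r := by
  have hsplit : x - c = (x - p) + (p - c) := by abel
  rw [hsplit, norm_add_sq_real, hp]
  linarith

theorem closedBall_inter_inner_le_subset_closedBall {c p : E} {γ r : ℝ} (hr : 0 < r)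
    (hγ : 2 * r ≤ γ) (hp : dist p c = γ) :
    closedBall p √(γ * r) ∩ {x | ⟪x - p, γ⁻¹ • (p - c)⟫ ≤ -3 * r}
      ⊆ closedBall c (γ - 2 * r) := by
  rintro x ⟨hball, hdepth⟩
  rw [dist_eq_norm] at hp
  rw [mem_closedBall, dist_eq_norm] at hball ⊢
  have hγpos : 0 < γ := by linarith
  have hx : ‖x - p‖ ^ 2 ≤ γ * r := by
    calc ‖x - p‖ ^ 2 ≤ √(γ * r) ^ 2 := by gcongr
      _ = γ * r := Real.sq_sqrt (by positivity)
  have hdepth' : ⟪x - p, p - c⟫ ≤ -3 * r * γ := by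
    rw [Set.mem_ofPred_eq, real_inner_smul_right, inv_mul_le_iff₀ hγpos] at hdepth
    linarith
  refine le_of_pow_le_pow_left₀ two_ne_zero (by linarith) ?_
  calc ‖x - c‖ ^ 2 ≤ γ ^ 2 - 5 * γ * r := norm_sub_sq_le_of_inner_le hp hx hdepth'
    _ ≤ (γ - 2 * r) ^ 2 := by nlinarith

end

/-- Parabolic-scaling inclusion: for `0 < r < γ/4`, a point `x_r` on the sphere of radius
`γ` around `x'` with outward unit normal `ν = (x_r - x')/γ`, the set
`B_{√(γr)}(x_r) ∩ {(x - x_r)·ν ≤ -3r}` is contained in `B_{γ-2r}(x')`. -/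
theorem stmt17 (n : ℕ) (γ r : ℝ) (hr : 0 < r) (hrγ : r < γ / 4)
    (x' xr : EuclideanSpace ℝ (Fin n)) (hxr : dist xr x' = γ)
    (ν : EuclideanSpace ℝ (Fin n)) (hν : ν = γ⁻¹ • (xr - x')) :
    Metric.closedBall xr (Real.sqrt (γ * r))
        ∩ {x : EuclideanSpace ℝ (Fin n) | (inner ℝ (x - xr) ν : ℝ) ≤ -3 * r}
      ⊆ Metric.closedBall x' (γ - 2 * r) := by
  subst hν
  exact closedBall_inter_inner_le_subset_closedBall hr (by linarith) hxr
end
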